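/- arXiv:1302.3157 — 2 statements merged into one kernel-verified Lean document; each statement's English description precedes it below -/
import Mathlib

section
/- In the type D Weyl group D_n (signed permutations of {1,...,n} changing an even number of signs), if v is the minimal-length representative of a positive coset of W_P\\W with v^{-1}(1) = n, and u is the maximal-length representative of a negative coset with u^{-1}(-1) = n, then u and v are not comparable in Bruhat order. -/
/-- `w` is a signed permutation of `{1,…,n}` (type `B` Weyl group element),
viewed inside `Equiv.Perm ℤ`: it is odd and fixes everything beyond `n`. -/
def IsSignedPerm (n : ℕ) (w : Equiv.Perm ℤ) : Prop :=
  (∀ x : ℤ, w (-x) = - w x) ∧ ∀ x : ℤ, (n : ℤ) < |x| → w x = x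

/-- The simple reflections of the hyperoctahedral group `Bₙ`:
for `i < n`, `sᵢ` swaps the values `i, i+1` (and `-i, -(i+1)`);
`sₙ` changes the sign of `n`. -/
def simpleB (n i : ℕ) : Equiv.Perm ℤ :=
  if i = n then Equiv.swap (n : ℤ) (-(n : ℤ))
  else Equiv.swap (i : ℤ) ((i : ℤ) + 1) * Equiv.swap (-(i : ℤ)) (-(i : ℤ) - 1)

/-- The parabolic subgroup `W_P` generated by `s₂, …, sₙ`. -/
def WP_B (n : ℕ) : Subgroup (Equiv.Perm ℤ) :=
  Subgroup.closure {g | ∃ i : ℕ, 2 ≤ i ∧ i ≤ n ∧ g = simpleB n i}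

/-- The type `B` length function. -/
noncomputable def lenB (n : ℕ) (w : Equiv.Perm ℤ) : ℕ :=
  ((Finset.Icc (1 : ℤ) (n : ℤ) ×ˢ Finset.Icc (1 : ℤ) (n : ℤ)).filter
    (fun p => p.1 < p.2 ∧ w p.2 < w p.1)).card +
  ((Finset.Icc (1 : ℤ) (n : ℤ) ×ˢ Finset.Icc (1 : ℤ) (n : ℤ)).filter
    (fun p => p.1 ≤ p.2 ∧ w p.1 + w p.2 < 0)).card

/-- Reflections of `Bₙ`: conjugates of simple reflections by group elements. -/
def IsReflB (n : ℕ) (t : Equiv.Perm ℤ) : Prop :=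
  ∃ g s : Equiv.Perm ℤ, IsSignedPerm n g ∧
    (∃ i : ℕ, 1 ≤ i ∧ i ≤ n ∧ s = simpleB n i) ∧ t = g * s * g⁻¹

/-- Bruhat order on `Bₙ`. -/
def BruhatLE_B (n : ℕ) : Equiv.Perm ℤ → Equiv.Perm ℤ → Prop :=
  Relation.ReflTransGen
    (fun a b => (∃ t, IsReflB n t ∧ b = t * a) ∧ lenB n a < lenB n b)

/-- `v` is a minimal length representative of its left coset `W_P v`. -/
def IsMinRepB (n : ℕ) (v : Equiv.Perm ℤ) : Prop :=
  IsSignedPerm n v ∧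
    ∀ w : Equiv.Perm ℤ, IsSignedPerm n w → w * v⁻¹ ∈ WP_B n → lenB n v ≤ lenB n w

/-- `u` is a maximal length representative of its left coset `W_P u`. -/
def IsMaxRepB (n : ℕ) (u : Equiv.Perm ℤ) : Prop :=
  IsSignedPerm n u ∧
    ∀ w : Equiv.Perm ℤ, IsSignedPerm n w → w * u⁻¹ ∈ WP_B n → lenB n w ≤ lenB n u

/-- `w` is a type `D` signed permutation: a signed permutation with an even
number of negative entries. -/
def IsSignedPermD (n : ℕ) (w : Equiv.Perm ℤ) : Prop :=
  IsSignedPerm n w ∧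
    Even (((Finset.Icc (1 : ℤ) (n : ℤ)).filter (fun i => w i < 0)).card)

/-- The simple reflections of the type `D` Weyl group `Dₙ`:
for `i < n`, `sᵢ` swaps the values `i, i+1` (and `-i, -(i+1)`);
`sₙ` sends `n-1 ↦ -n` and `n ↦ -(n-1)`. -/
def simpleD (n i : ℕ) : Equiv.Perm ℤ :=
  if i = n then
    Equiv.swap ((n : ℤ) - 1) (-(n : ℤ)) * Equiv.swap (n : ℤ) (-(n : ℤ) + 1)
  else Equiv.swap (i : ℤ) ((i : ℤ) + 1) * Equiv.swap (-(i : ℤ)) (-(i : ℤ) - 1)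

/-- The parabolic subgroup `W_P` of `Dₙ` generated by all simple reflections
except the one corresponding to the simple root `x₁ - x₂`. -/
def WP_D (n : ℕ) : Subgroup (Equiv.Perm ℤ) :=
  Subgroup.closure {g | ∃ i : ℕ, 2 ≤ i ∧ i ≤ n ∧ g = simpleD n i}

/-- The type `D` length function. -/
noncomputable def lenD (n : ℕ) (w : Equiv.Perm ℤ) : ℕ :=
  ((Finset.Icc (1 : ℤ) (n : ℤ) ×ˢ Finset.Icc (1 : ℤ) (n : ℤ)).filter
    (fun p => p.1 < p.2 ∧ w p.2 < w p.1)).card +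
  ((Finset.Icc (1 : ℤ) (n : ℤ) ×ˢ Finset.Icc (1 : ℤ) (n : ℤ)).filter
    (fun p => p.1 < p.2 ∧ w p.1 + w p.2 < 0)).card

/-- Reflections of `Dₙ`: conjugates of simple reflections by group elements. -/
def IsReflD (n : ℕ) (t : Equiv.Perm ℤ) : Prop :=
  ∃ g s : Equiv.Perm ℤ, IsSignedPermD n g ∧
    (∃ i : ℕ, 1 ≤ i ∧ i ≤ n ∧ s = simpleD n i) ∧ t = g * s * g⁻¹

/-- Bruhat order on `Dₙ`. -/
def BruhatLE_D (n : ℕ) : Equiv.Perm ℤ → Equiv.Perm ℤ → Prop :=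
  Relation.ReflTransGen
    (fun a b => (∃ t, IsReflD n t ∧ b = t * a) ∧ lenD n a < lenD n b)

/-- `v` is a minimal length representative of its left coset `W_P v` in `Dₙ`. -/
def IsMinRepD (n : ℕ) (v : Equiv.Perm ℤ) : Prop :=
  IsSignedPermD n v ∧
    ∀ w : Equiv.Perm ℤ, IsSignedPermD n w → w * v⁻¹ ∈ WP_D n → lenD n v ≤ lenD n w

/-- `u` is a maximal length representative of its left coset `W_P u` in `Dₙ`. -/
def IsMaxRepD (n : ℕ) (u : Equiv.Perm ℤ) : Prop :=
  IsSignedPermD n u ∧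
    ∀ w : Equiv.Perm ℤ, IsSignedPermD n w → w * u⁻¹ ∈ WP_D n → lenD n w ≤ lenD n u


/-!
Along a Bruhat chain in `Dₙ` the last entry `w n` can only decrease. Indeed, write `t * a = a * r`,
where `r` exchanges position `n` with some position `±p`; if `t` raised the value `a n`, then,
comparing position by position the pairs `{k, p}` and `{k, n}`, `r` would create no more inversions
than it removes, so `t * a` would be no longer than `a`. Moreover `w n ≠ 0`, and a reflection
`(c d)(-c -d)` never sends `x` to `-x`. Hence going up from `v`, the last entry stays `1` or jumps
below `-1`, never reaching `u n = -1`; going up from `u` it never climbs back to `v n = 1`.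
-/

open Equiv Finset

namespace IsSignedPerm

variable {n : ℕ} {g h : Perm ℤ}

lemma map_zero (hg : IsSignedPerm n g) : g 0 = 0 := by
  have := hg.1 0
  rw [neg_zero] at this
  omega

lemma apply_ne_zero (hg : IsSignedPerm n g) {x : ℤ} (hx : x ≠ 0) : g x ≠ 0 :=
  fun h => hx (g.injective (h.trans hg.map_zero.symm))

lemma abs_apply_le (hg : IsSignedPerm n g) {x : ℤ} (hx : |x| ≤ n) : |g x| ≤ n := by
  by_contra! h
  rw [g.injective (hg.2 _ h)] at h
  omega

lemma mul (hg : IsSignedPerm n g) (hh : IsSignedPerm n h) : IsSignedPerm n (g * h) :=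
  ⟨fun x => by simp only [Perm.mul_apply, hh.1, hg.1],
   fun x hx => by simp only [Perm.mul_apply, hh.2 x hx, hg.2 x hx]⟩

lemma inv (hg : IsSignedPerm n g) : IsSignedPerm n g⁻¹ :=
  ⟨fun x => by rw [Perm.inv_eq_iff_eq, hg.1, ← Perm.mul_apply, mul_inv_cancel, Perm.one_apply],
   fun x hx => by rw [Perm.inv_eq_iff_eq, hg.2 x hx]⟩

end IsSignedPerm

/-- The reflection of `Dₙ` in the root `e_c - e_d`, where `e_{-c} = -e_c`. -/
def reflD (c d : ℤ) : Perm ℤ := swap c d * swap (-c) (-d)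

def IsReflPair (n : ℕ) (c d : ℤ) : Prop :=
  c ≠ 0 ∧ d ≠ 0 ∧ c ≠ d ∧ c ≠ -d ∧ |c| ≤ n ∧ |d| ≤ n

lemma reflD_apply {c d : ℤ} (hc : c ≠ 0) (hd : d ≠ 0) (hcd : c ≠ d) (hcd' : c ≠ -d) (x : ℤ) :
    reflD c d x =
      if x = c then d else if x = d then c else if x = -c then -d else if x = -d then -c else x := by
  simp only [reflD, Perm.mul_apply, swap_apply_def]
  split_ifs <;> omega

lemma reflD_comm (c d : ℤ) : reflD c d = reflD d c := by
  rw [reflD, reflD, swap_comm c, swap_comm (-c)]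

lemma reflD_neg_neg {c d : ℤ} (hc : c ≠ 0) (hd : d ≠ 0) (hcd : c ≠ d) (hcd' : c ≠ -d) :
    reflD (-c) (-d) = reflD c d := by
  ext x
  rw [reflD_apply (neg_ne_zero.2 hc) (neg_ne_zero.2 hd) (by omega) (by omega),
    reflD_apply hc hd hcd hcd']
  split_ifs <;> omega

lemma reflD_conj {g : Perm ℤ} (hg : ∀ x, g (-x) = -g x) (c d : ℤ) :
    g * reflD c d * g⁻¹ = reflD (g c) (g d) := by
  rw [reflD, reflD, ← hg, ← hg, swap_apply_apply, swap_apply_apply]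
  group

namespace IsReflPair

variable {n : ℕ} {c d : ℤ}

lemma symm (h : IsReflPair n c d) : IsReflPair n d c := by
  obtain ⟨hc, hd, hcd, hcd', hcn, hdn⟩ := h
  exact ⟨hd, hc, hcd.symm, by omega, hdn, hcn⟩

lemma neg (h : IsReflPair n c d) : IsReflPair n (-c) (-d) := by
  obtain ⟨hc, hd, hcd, hcd', hcn, hdn⟩ := h
  exact ⟨by omega, by omega, by omega, by omega, by rwa [abs_neg], by rwa [abs_neg]⟩

lemma map {g : Perm ℤ} (hg : IsSignedPerm n g) (h : IsReflPair n c d) :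
    IsReflPair n (g c) (g d) := by
  obtain ⟨hc, hd, hcd, hcd', hcn, hdn⟩ := h
  refine ⟨hg.apply_ne_zero hc, hg.apply_ne_zero hd, g.injective.ne hcd, ?_,
    hg.abs_apply_le hcn, hg.abs_apply_le hdn⟩
  rw [← hg.1]
  exact g.injective.ne hcd'

lemma reflD_apply (h : IsReflPair n c d) (x : ℤ) :
    reflD c d x =
      if x = c then d else if x = d then c else if x = -c then -d else if x = -d then -c else x :=
  _root_.reflD_apply h.1 h.2.1 h.2.2.1 h.2.2.2.1 x

lemma isSignedPerm (h : IsReflPair n c d) : IsSignedPerm n (reflD c d) := by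
  obtain ⟨hc, hd, hcd, hcd', hcn, hdn⟩ := id h
  rw [abs_le] at hcn hdn
  refine ⟨fun x => ?_, fun x hx => ?_⟩
  · rw [h.reflD_apply, h.reflD_apply]
    split_ifs <;> omega
  · rw [h.reflD_apply]
    rcases abs_cases x with ⟨hx', _⟩ | ⟨hx', _⟩ <;> split_ifs <;> omega

lemma eq_reflD_of_apply_ne (h : IsReflPair n c d) {z : ℤ} (hz : reflD c d z ≠ z) :
    IsReflPair n z (reflD c d z) ∧ reflD c d = reflD z (reflD c d z) := by
  obtain ⟨hc, hd, hcd, hcd', -, -⟩ := id h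
  rw [h.reflD_apply] at hz ⊢
  by_cases h1 : z = c
  · simp only [if_pos h1]; subst h1; exact ⟨h, rfl⟩
  by_cases h2 : z = d
  · simp only [if_neg h1, if_pos h2]; subst h2; exact ⟨h.symm, reflD_comm _ _⟩
  by_cases h3 : z = -c
  · simp only [if_neg h1, if_neg h2, if_pos h3]; subst h3
    exact ⟨h.neg, (reflD_neg_neg hc hd hcd hcd').symm⟩
  by_cases h4 : z = -d
  · simp only [if_neg h1, if_neg h2, if_neg h3, if_pos h4]; subst h4
    exact ⟨h.symm.neg, by rw [reflD_comm (-d), reflD_neg_neg hc hd hcd hcd']⟩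
  simp only [if_neg h1, if_neg h2, if_neg h3, if_neg h4] at hz
  exact absurd rfl hz

end IsReflPair

lemma simpleD_eq_reflD {n i : ℕ} (hn : 2 ≤ n) (hi : 1 ≤ i) (hin : i ≤ n) :
    ∃ c d, IsReflPair n c d ∧ simpleD n i = reflD c d := by
  unfold simpleD
  split_ifs with h
  · refine ⟨n - 1, -n, ⟨by omega, by omega, by omega, by omega, ?_, ?_⟩, ?_⟩
    · rw [abs_le]; omega
    · rw [abs_neg, abs_of_nonneg (by omega)]
    · rw [reflD, neg_neg, swap_comm (-(_ - 1))]
      congr 2; ring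
  · refine ⟨i, i + 1, ⟨by omega, by omega, by omega, by omega, ?_, ?_⟩, ?_⟩
    · rw [abs_le]; omega
    · rw [abs_le]; omega
    · rw [reflD, neg_add', sub_eq_add_neg]

lemma IsReflD.exists_eq_reflD {n : ℕ} (hn : 2 ≤ n) {t : Perm ℤ} (ht : IsReflD n t) :
    ∃ c d, IsReflPair n c d ∧ t = reflD c d := by
  obtain ⟨g, s, hg, ⟨i, hi, hin, rfl⟩, rfl⟩ := ht
  obtain ⟨c, d, hcd, hs⟩ := simpleD_eq_reflD hn hi hin
  exact ⟨g c, g d, hcd.map hg.1, by rw [hs, reflD_conj hg.1.1]⟩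

/-- The contribution of a pair of positions `i < j` with values `x = w i`, `y = w j` to `lenD`. -/
def pairScore (x y : ℤ) : ℕ := (if y < x then 1 else 0) + (if x + y < 0 then 1 else 0)

lemma lenD_eq_sum (n : ℕ) (w : Perm ℤ) :
    lenD n w = ∑ i ∈ Icc (1 : ℤ) n, ∑ j ∈ Icc (1 : ℤ) n,
      if i < j then pairScore (w i) (w j) else 0 := by
  rw [lenD, card_filter, card_filter, ← sum_add_distrib, sum_product]
  refine sum_congr rfl fun i _ => sum_congr rfl fun j _ => ?_
  dsimp only [pairScore]
  split_ifs <;> omega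

lemma sum_sum_eq_add_sum_erase_erase {α M : Type*} [DecidableEq α] [AddCommMonoid M]
    {s : Finset α} {p m : α} (hp : p ∈ s) (hm : m ∈ s) (hpm : p ≠ m) (F : α → α → M) :
    ∑ i ∈ s, ∑ j ∈ s, F i j =
      F p p + F p m + F m p + F m m +
        ∑ k ∈ (s.erase p).erase m, (F k p + F p k + F k m + F m k) +
        ∑ i ∈ (s.erase p).erase m, ∑ j ∈ (s.erase p).erase m, F i j := by
  set K := (s.erase p).erase m
  have hs : s = insert p (insert m K) := by
    rw [insert_erase (mem_erase.2 ⟨hpm.symm, hm⟩), insert_erase hp]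
  have hpK : p ∉ insert m K := by simp [K, hpm]
  have hmK : m ∉ K := by simp [K]
  simp only [hs, sum_insert hpK, sum_insert hmK, sum_add_distrib]
  abel

lemma lenD_le_of_eqOn_of_pairScore_le {n : ℕ} {a b : Perm ℤ} {p : ℤ} (hp : 1 ≤ p) (hpn : p < n)
    (hagree : ∀ k : ℤ, 1 ≤ k → k ≤ n → k ≠ p → k ≠ n → b k = a k)
    (hpair : pairScore (b p) (b n) ≤ pairScore (a p) (a n))
    (hlow : ∀ k : ℤ, 1 ≤ k → k < p →
      pairScore (a k) (b p) + pairScore (a k) (b n) ≤ pairScore (a k) (a p) + pairScore (a k) (a n))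
    (hmid : ∀ k : ℤ, p < k → k < n →
      pairScore (b p) (a k) + pairScore (a k) (b n) ≤ pairScore (a p) (a k) + pairScore (a k) (a n)) :
    lenD n b ≤ lenD n a := by
  have hpS : p ∈ Icc (1 : ℤ) n := mem_Icc.2 ⟨hp, hpn.le⟩
  have hnS : (n : ℤ) ∈ Icc (1 : ℤ) n := mem_Icc.2 ⟨hp.trans hpn.le, le_rfl⟩
  rw [lenD_eq_sum, lenD_eq_sum, sum_sum_eq_add_sum_erase_erase hpS hnS hpn.ne,
    sum_sum_eq_add_sum_erase_erase hpS hnS hpn.ne]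
  simp only [lt_irrefl, if_false, if_pos hpn, if_neg (not_lt_of_gt hpn), add_zero, zero_add]
  refine add_le_add (add_le_add hpair (sum_le_sum fun k hk => ?_))
    (le_of_eq (sum_congr rfl fun i hi => sum_congr rfl fun j hj => ?_))
  · simp only [mem_erase, mem_Icc] at hk
    obtain ⟨hkn, hkp, hk1, hk_le⟩ := hk
    have hk_lt : k < n := lt_of_le_of_ne hk_le hkn
    simp only [hagree k hk1 hk_le hkp hkn, if_pos hk_lt, if_neg (not_lt_of_gt hk_lt), add_zero]
    rcases lt_or_gt_of_ne hkp with h | h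
    · simp only [if_pos h, if_neg (not_lt_of_gt h), add_zero]
      exact hlow k hk1 h
    · simp only [if_neg (not_lt_of_gt h), if_pos h, zero_add]
      exact hmid k h hk_lt
  · simp only [mem_erase, mem_Icc] at hi hj
    rw [hagree i hi.2.2.1 hi.2.2.2 hi.2.1 hi.1, hagree j hj.2.2.1 hj.2.2.2 hj.2.1 hj.1]

lemma lenD_mul_reflD_le {n : ℕ} {a : Perm ℤ} {p : ℤ} (hp : 1 ≤ p) (hpn : p < n)
    (hlt : a n < a p) : lenD n (a * reflD p n) ≤ lenD n a := by
  have hr := reflD_apply (c := p) (d := n) (by omega) (by omega) hpn.ne (by omega)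
  refine lenD_le_of_eqOn_of_pairScore_le hp hpn (fun k hk1 _ hkp hkn => ?_) ?_
    (fun k _ _ => ?_) (fun k _ _ => ?_)
  all_goals simp only [Perm.mul_apply, hr]
  · rw [if_neg hkp, if_neg hkn, if_neg (by omega), if_neg (by omega)]
  all_goals simp only [if_neg hpn.ne', if_neg hpn.ne]
  all_goals unfold pairScore; split_ifs <;> omega

lemma lenD_mul_reflD_neg_le {n : ℕ} {a : Perm ℤ} (ha : IsSignedPerm n a) {p : ℤ} (hp : 1 ≤ p)
    (hpn : p < n) (hneg : a p + a n < 0) : lenD n (a * reflD p (-n)) ≤ lenD n a := by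
  have hr := reflD_apply (c := p) (d := -n) (by omega) (by omega) (by omega) (by omega)
  have hval : ∀ k, 1 ≤ k → k ≠ p → k ≠ n →
      a k ≠ a p ∧ a k ≠ -a p ∧ a k ≠ a n ∧ a k ≠ -a n := by
    intro k hk hkp hkn
    simp only [← ha.1, a.injective.ne_iff]
    omega
  refine lenD_le_of_eqOn_of_pairScore_le hp hpn (fun k hk1 _ hkp hkn => ?_) ?_
    (fun k hk1 hkp => ?_) (fun k hkp hkn => ?_)
  all_goals simp only [Perm.mul_apply, hr]
  · rw [if_neg hkp, if_neg (by omega), if_neg (by omega), if_neg (by omega)]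
  all_goals simp only [↓reduceIte, neg_neg, if_neg hpn.ne', if_neg (show (n : ℤ) ≠ -p by omega),
    if_neg (show (n : ℤ) ≠ -(n : ℤ) by omega), ha.1 p, ha.1 n]
  · unfold pairScore; split_ifs <;> omega
  · have := hval k hk1 (by omega) (by omega)
    unfold pairScore; split_ifs <;> omega
  · have := hval k (by omega) (by omega) (by omega)
    unfold pairScore; split_ifs <;> omega

lemma lenD_reflD_mul_le {n : ℕ} {a : Perm ℤ} (ha : IsSignedPerm n a) {c d : ℤ}
    (hcd : IsReflPair n c d) (hlt : a n < reflD c d (a n)) :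
    lenD n (reflD c d * a) ≤ lenD n a := by
  obtain ⟨hze, ht⟩ := hcd.eq_reflD_of_apply_ne hlt.ne'
  set e := reflD c d (a n)
  have hconj : reflD (a n) e * a = a * reflD n (a.symm e) := by
    have h := reflD_conj ha.inv.1 (a n) e
    simp only [inv_inv, Perm.coe_inv, symm_apply_apply] at h
    rw [← h]
    group
  have hq := hze.map ha.inv
  simp only [Perm.coe_inv, symm_apply_apply] at hq
  obtain ⟨-, hq0, hnq, hnq', -, hqn⟩ := hq
  have hqe : a (a.symm e) = e := a.apply_symm_apply e
  rw [abs_le] at hqn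
  rw [ht, hconj]
  rcases lt_or_gt_of_ne hq0 with hq | hq
  · rw [← reflD_neg_neg (by omega) hq0 hnq hnq', reflD_comm]
    refine lenD_mul_reflD_neg_le ha (by omega) (by omega) ?_
    rw [ha.1, hqe]
    omega
  · rw [reflD_comm]
    exact lenD_mul_reflD_le (by omega) (by omega) (by rwa [hqe])

lemma IsReflD.isSignedPerm_mul {n : ℕ} (hn : 2 ≤ n) {a t : Perm ℤ} (ht : IsReflD n t)
    (ha : IsSignedPerm n a) : IsSignedPerm n (t * a) := by
  obtain ⟨c, d, hcd, rfl⟩ := ht.exists_eq_reflD hn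
  exact hcd.isSignedPerm.mul ha

lemma IsReflD.apply_mul_le_and_ne_neg {n : ℕ} (hn : 2 ≤ n) {a t : Perm ℤ} (ht : IsReflD n t)
    (ha : IsSignedPerm n a) (hlen : lenD n a < lenD n (t * a)) :
    (t * a) n ≤ a n ∧ (t * a) n ≠ -a n := by
  obtain ⟨c, d, hcd, rfl⟩ := ht.exists_eq_reflD hn
  rw [Perm.mul_apply]
  by_cases hfix : reflD c d (a n) = a n
  · have := ha.apply_ne_zero (x := n) (by omega)
    omega
  · have hle : reflD c d (a n) ≤ a n :=
      not_lt.1 fun hlt => (lenD_reflD_mul_le ha hcd hlt).not_gt hlen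
    have := (hcd.eq_reflD_of_apply_ne hfix).1.2.2.2.1
    exact ⟨hle, by omega⟩

namespace BruhatLE_D

variable {n : ℕ} {a b : Perm ℤ}

lemma isSignedPerm (hn : 2 ≤ n) (ha : IsSignedPerm n a) (h : BruhatLE_D n a b) :
    IsSignedPerm n b := by
  induction h with
  | refl => exact ha
  | tail _ hstep ih =>
    obtain ⟨⟨t, ht, rfl⟩, -⟩ := hstep
    exact ht.isSignedPerm_mul hn ih

lemma apply_le (hn : 2 ≤ n) (ha : IsSignedPerm n a) (h : BruhatLE_D n a b) : b n ≤ a n := by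
  induction h with
  | refl => exact le_rfl
  | tail hac hstep ih =>
    obtain ⟨⟨t, ht, rfl⟩, hlen⟩ := hstep
    exact ((ht.apply_mul_le_and_ne_neg hn (isSignedPerm hn ha hac) hlen).1).trans ih

lemma apply_ne_neg_one (hn : 2 ≤ n) (ha : IsSignedPerm n a) (ha1 : a n = 1)
    (h : BruhatLE_D n a b) : b n ≠ -1 := by
  suffices b n = 1 ∨ b n ≤ -2 by omega
  induction h with
  | refl => exact Or.inl ha1
  | tail hac hstep ih =>
    obtain ⟨⟨t, ht, rfl⟩, hlen⟩ := hstep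
    have hc := isSignedPerm hn ha hac
    have := (ht.isSignedPerm_mul hn hc).apply_ne_zero (x := n) (by omega)
    have := ht.apply_mul_le_and_ne_neg hn hc hlen
    omega

end BruhatLE_D

/-- in `Dₙ`, if `v` is the minimal-length representative of a
positive coset with `v⁻¹(1) = n`, and `u` is the maximal-length representative
of a negative coset with `u⁻¹(-1) = n`, then `u` and `v` are incomparable in
Bruhat order. -/
theorem typeD_incomparable (n : ℕ) (hn : 2 ≤ n) (u v : Equiv.Perm ℤ)
    (hu : IsMaxRepD n u) (hv : IsMinRepD n v)
    (hvpos : v.symm 1 = (n : ℤ)) (huneg : u.symm (-1) = (n : ℤ)) :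
    ¬ BruhatLE_D n v u ∧ ¬ BruhatLE_D n u v := by
  have hvn : v n = 1 := by rw [← hvpos, Equiv.apply_symm_apply]
  have hun : u n = -1 := by rw [← huneg, Equiv.apply_symm_apply]
  refine ⟨fun h => BruhatLE_D.apply_ne_neg_one hn hv.1.1 hvn h hun, fun h => ?_⟩
  have := BruhatLE_D.apply_le hn hu.1.1 h
  omega
end

section
/- Every symmetric (2,2n-2)-clan (a string of length 2n) satisfies exactly one of: (a) it consists of 2 plus signs and 2n-2 minus signs; (b) it consists of 2 pairs of matching natural numbers and 2n-4 minus signs, with the numbers forming one of the patterns (1,1,2,2), (1,2,1,2), or (1,2,2,1). In particular, no symmetric (2,2n-2)-clan contains exactly one pair of matching numbers. -/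
/-- A clan of length `N`: each position carries a sign (`some true` = `+`,
`some false` = `-`) or is numeric (`none`), and the numeric positions are
matched in pairs by the fixed-point-free (on numeric positions) involution
`mate`.  Identifying clans up to renaming of the natural numbers, only this
matching matters. -/
structure Clan (N : ℕ) where
  sign : Fin N → Option Bool
  mate : Fin N → Fin N
  mate_invol : ∀ i, mate (mate i) = i
  mate_fix : ∀ i, sign i ≠ none → mate i = i
  mate_ne : ∀ i, sign i = none → mate i ≠ i

/-- The set of positions of `+` signs. -/
def Clan.plusSet {N : ℕ} (γ : Clan N) : Finset (Fin N) :=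
  Finset.univ.filter (fun i => γ.sign i = some true)

/-- The set of positions of `-` signs. -/
def Clan.minusSet {N : ℕ} (γ : Clan N) : Finset (Fin N) :=
  Finset.univ.filter (fun i => γ.sign i = some false)

/-- The set of numeric positions. -/
def Clan.numSet {N : ℕ} (γ : Clan N) : Finset (Fin N) :=
  Finset.univ.filter (fun i => γ.sign i = none)

/-- A clan is a `(2,q)`-clan when `#(+) - #(-) = 2 - q`. -/
def IsClan2 (q : ℕ) {N : ℕ} (γ : Clan N) : Prop :=
  (γ.plusSet.card : ℤ) - (γ.minusSet.card : ℤ) = 2 - (q : ℤ)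

/-- A clan is symmetric if reversing its string of characters gives the same
clan: signs are preserved under `i ↦ N+1-i` and matched pairs go to matched
pairs. -/
def Clan.IsSymmetric {N : ℕ} (γ : Clan N) : Prop :=
  (∀ i, γ.sign i.rev = γ.sign i) ∧ ∀ i, γ.mate i.rev = (γ.mate i).rev

/-- Type (a) symmetric `(2,2n-2)`-clan: 2 plus signs and `2n-2` minus signs. -/
def TypeA_evenLen (n : ℕ) (γ : Clan (2 * n)) : Prop :=
  γ.plusSet.card = 2 ∧ γ.minusSet.card = 2 * n - 2 ∧ γ.numSet = ∅

/-- Type (b) symmetric `(2,2n-2)`-clan: 2 pairs of matching numbers and `2n-4`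
minus signs, with the numbers in one of the patterns `(1,1,2,2)`, `(1,2,1,2)`,
`(1,2,2,1)`. -/
def TypeB_evenLen (n : ℕ) (γ : Clan (2 * n)) : Prop :=
  γ.plusSet.card = 0 ∧ γ.minusSet.card = 2 * n - 4 ∧
    ∃ p1 p2 p3 p4 : Fin (2 * n), p1 < p2 ∧ p2 < p3 ∧ p3 < p4 ∧
      γ.numSet = {p1, p2, p3, p4} ∧
      ((γ.mate p1 = p2 ∧ γ.mate p3 = p4) ∨
       (γ.mate p1 = p3 ∧ γ.mate p2 = p4) ∨
       (γ.mate p1 = p4 ∧ γ.mate p2 = p3))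

/-!
Counting positions gives `#(+) + #(-) + #(numbers) = 2n`, while the clan condition says
`#(+) - #(-) = 4 - 2n`; hence `2 · #(+) + #(numbers) = 4`. Reversal is a fixed-point-free
involution of the `2n` positions that preserves the `+` signs, so `#(+) ≠ 1`. This leaves
`#(+) = 2` with no numbers, or `#(+) = 0` with four numeric positions, whose matching is one of
the three perfect matchings of four ordered points.
-/
theorem Fin.rev_ne_self_of_even {N : ℕ} (hN : Even N) (i : Fin N) : i.rev ≠ i := by
  obtain ⟨k, rfl⟩ := hN
  intro h
  have := congrArg Fin.val h
  rw [Fin.val_rev] at this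
  omega

theorem Finset.exists_lt_lt_lt_eq_of_card_eq_four {α : Type*} [LinearOrder α] {s : Finset α}
    (hs : s.card = 4) : ∃ a b c d, a < b ∧ b < c ∧ c < d ∧ s = {a, b, c, d} := by
  let e := s.orderEmbOfFin hs
  have hrange : Set.range e = s := s.range_orderEmbOfFin hs
  refine ⟨e 0, e 1, e 2, e 3, e.strictMono (by decide), e.strictMono (by decide),
    e.strictMono (by decide), ?_⟩
  rw [← Finset.coe_inj, ← hrange]
  ext x
  simp [Fin.exists_fin_succ, eq_comm]

namespace Clan

variable {N : ℕ} (γ : Clan N)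

@[simp]
theorem mem_numSet {i : Fin N} : i ∈ γ.numSet ↔ γ.sign i = none := by
  simp [numSet]

theorem card_plusSet_add_card_minusSet_add_card_numSet :
    γ.plusSet.card + γ.minusSet.card + γ.numSet.card = N := by
  classical
  have := Finset.card_eq_sum_card_fiberwise (s := Finset.univ) (t := Finset.univ)
    (f := γ.sign) (fun _ _ => Finset.mem_univ _)
  simp only [Finset.card_univ, Fintype.card_fin, Fintype.sum_option, Fintype.sum_bool] at this
  simp only [plusSet, minusSet, numSet]
  omega

theorem mate_mem_numSet {i : Fin N} (hi : i ∈ γ.numSet) : γ.mate i ∈ γ.numSet := by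
  rw [mem_numSet] at hi ⊢
  by_contra h
  exact γ.mate_ne i hi (by rw [← γ.mate_fix _ h, γ.mate_invol])

theorem mate_pattern_of_numSet_eq {p₁ p₂ p₃ p₄ : Fin N} (h₁₂ : p₁ < p₂) (h₂₃ : p₂ < p₃)
    (h₃₄ : p₃ < p₄) (hnum : γ.numSet = {p₁, p₂, p₃, p₄}) :
    (γ.mate p₁ = p₂ ∧ γ.mate p₃ = p₄) ∨
    (γ.mate p₁ = p₃ ∧ γ.mate p₂ = p₄) ∨
    (γ.mate p₁ = p₄ ∧ γ.mate p₂ = p₃) := by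
  have hmate : ∀ p ∈ γ.numSet, γ.mate p ∈ γ.numSet ∧ γ.mate p ≠ p ∧ γ.mate (γ.mate p) = p :=
    fun p hp => ⟨γ.mate_mem_numSet hp, γ.mate_ne p (γ.mem_numSet.1 hp), γ.mate_invol p⟩
  simp only [hnum, Finset.mem_insert, Finset.mem_singleton] at hmate
  -- once `mate p₁` is fixed, `mate` being an involution leaves one choice for the next point
  have h₁ := hmate p₁ (by simp)
  have h₂ := hmate p₂ (by simp)
  have h₃ := hmate p₃ (by simp)
  grind

theorem IsSymmetric.card_plusSet_ne_one {γ : Clan N} (hsym : γ.IsSymmetric) (hN : Even N) :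
    γ.plusSet.card ≠ 1 := by
  intro h
  obtain ⟨a, ha⟩ := Finset.card_eq_one.mp h
  have hrev : a.rev ∈ γ.plusSet := by
    have : a ∈ γ.plusSet := ha ▸ Finset.mem_singleton_self a
    simpa [plusSet, hsym.1 a] using this
  rw [ha, Finset.mem_singleton] at hrev
  exact Fin.rev_ne_self_of_even hN a hrev

end Clan

theorem symm_clan_evenLen_dichotomy_general (n : ℕ)
    (γ : Clan (2 * n)) (hsym : γ.IsSymmetric)
    (hclan : IsClan2 (2 * n - 2) γ) :
    (TypeA_evenLen n γ ∨ TypeB_evenLen n γ) ∧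
    ¬ (TypeA_evenLen n γ ∧ TypeB_evenLen n γ) ∧
    γ.numSet.card ≠ 2 := by
  have hcard := γ.card_plusSet_add_card_minusSet_add_card_numSet
  have hplus := hsym.card_plusSet_ne_one (even_two_mul n)
  unfold IsClan2 at hclan
  refine ⟨?_, fun ⟨⟨hA, _⟩, ⟨hB, _⟩⟩ => by omega, by omega⟩
  obtain hP | hP : γ.plusSet.card = 0 ∨ γ.plusSet.card = 2 := by omega
  · obtain ⟨p₁, p₂, p₃, p₄, h₁₂, h₂₃, h₃₄, hnum⟩ :=
      Finset.exists_lt_lt_lt_eq_of_card_eq_four (by omega : γ.numSet.card = 4)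
    exact Or.inr ⟨hP, by omega, p₁, p₂, p₃, p₄, h₁₂, h₂₃, h₃₄, hnum,
      γ.mate_pattern_of_numSet_eq h₁₂ h₂₃ h₃₄ hnum⟩
  · exact Or.inl ⟨hP, by omega, Finset.card_eq_zero.mp (by omega)⟩

/-- every symmetric `(2,2n-2)`-clan is of exactly one of the
types (a), (b); in particular no such clan contains exactly one pair of
matching numbers. -/
theorem symm_clan_evenLen_dichotomy (n : ℕ) (hn : 2 ≤ n)
    (γ : Clan (2 * n)) (hsym : γ.IsSymmetric)
    (hclan : IsClan2 (2 * n - 2) γ) :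
    (TypeA_evenLen n γ ∨ TypeB_evenLen n γ) ∧
    ¬ (TypeA_evenLen n γ ∧ TypeB_evenLen n γ) ∧
    γ.numSet.card ≠ 2 :=
  symm_clan_evenLen_dichotomy_general n γ hsym hclan
end
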